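/- For the DDPM/VP semi-linear exponential-integrator identity, if x solves the reverse ODE with x-parametrization, then for s < t: x_t = (σ_t/σ_s) x_s + σ_t ∫_{λ_s}^{λ_t} e^{λ} \bar{x}(λ) dλ, where λ = log(α/σ); in particular when \bar{x}(λ) ≡ \bar{x} is constant, x_t = (σ_t/σ_s) x_s + σ_t (e^{λ_t} − e^{λ_s}) \bar{x} = (σ_t/σ_s)x_s + (α_t − (σ_t/σ_s)α_s) \bar{x}. -/
import Mathlib


open intervalIntegral Real

/-- DDPM/VP semi-linear exponential-integrator identity in the log-SNR coordinate
`λ` (with `e^λ = α/σ`): if `(σ λ)⁻¹ • x λ` has derivative `e^λ • x̄(λ)` (the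
x-parametrized reverse ODE), then for `λ_s < λ_t`
`x_t = (σ_t/σ_s) • x_s + σ_t • ∫_{λ_s}^{λ_t} e^λ x̄(λ) dλ`; in particular when `x̄`
is constant this equals `(σ_t/σ_s) • x_s + (α_t - (σ_t/σ_s) α_s) • x̄`. -/
theorem stmt_18
    {d : ℕ} (α σ : ℝ → ℝ) (hσpos : ∀ l, 0 < σ l) (hαpos : ∀ l, 0 < α l)
    (hexp : ∀ l, exp l = α l / σ l)
    (x xbar : ℝ → EuclideanSpace ℝ (Fin d))
    (lams lamt : ℝ) (hlam : lams < lamt)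
    (hode : ∀ l ∈ Set.Icc lams lamt,
      HasDerivAt (fun l => (σ l)⁻¹ • x l) (exp l • xbar l) l)
    (hcont : ContinuousOn (fun l => exp l • xbar l) (Set.Icc lams lamt)) :
    x lamt = (σ lamt / σ lams) • x lams +
        σ lamt • ∫ l in lams..lamt, exp l • xbar l ∧
    (∀ xb : EuclideanSpace ℝ (Fin d), (∀ l, xbar l = xb) →
      x lamt = (σ lamt / σ lams) • x lams +
          (σ lamt * (exp lamt - exp lams)) • xb ∧
      x lamt = (σ lamt / σ lams) • x lams +
          (α lamt - (σ lamt / σ lams) * α lams) • xb) := by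
  have hne : ∀ l, σ l ≠ 0 := fun l => (hσpos l).ne'
  have hftc : ∫ l in lams..lamt, exp l • xbar l =
      (σ lamt)⁻¹ • x lamt - (σ lams)⁻¹ • x lams := by
    apply intervalIntegral.integral_eq_sub_of_hasDerivAt
    · intro l hl
      exact hode l (Set.uIcc_of_le hlam.le ▸ hl)
    · have hc := hcont
      rw [← Set.uIcc_of_le hlam.le] at hc
      exact hc.intervalIntegrable
  have key : x lamt = (σ lamt / σ lams) • x lams +
      σ lamt • ∫ l in lams..lamt, exp l • xbar l := by
    rw [hftc, smul_sub, smul_smul, smul_smul, mul_inv_cancel₀ (hne lamt), one_smul,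
      ← div_eq_mul_inv]
    abel
  refine ⟨key, fun xb hxb => ?_⟩
  have hint : ∫ l in lams..lamt, exp l • xbar l = (exp lamt - exp lams) • xb := by
    simp only [hxb]
    rw [intervalIntegral.integral_smul_const, integral_exp]
  have h1 : x lamt = (σ lamt / σ lams) • x lams +
      (σ lamt * (exp lamt - exp lams)) • xb := by
    rw [key, hint, smul_smul]
  refine ⟨h1, ?_⟩
  have : σ lamt * (exp lamt - exp lams) = α lamt - (σ lamt / σ lams) * α lams := by
    rw [hexp, hexp]
    field_simp [hne lamt, hne lams]
  rwa [this] at h1
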